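/- Consider an IDV social choice setting in which every valuation v_i is decomposable and differentiable in its own signal s_i. If a randomized social choice function f : S → Δ(𝒜) is implementable (i.e., some payments p make (f, p) ex-post IC-IR), then the profile v satisfies f-single-crossing. -/

import Mathlib

open Finset

noncomputable section

/-- The signal profile lies in the signal space `[0,1]^n`. -/
def InSig {n : ℕ} (s : Fin n → ℝ) : Prop := ∀ i, s i ∈ Set.Icc (0 : ℝ) 1

/-- Expected value `⟨u, d⟩ = ∑ a, d a · u a` of the vector `u` under the distribution `d`. -/
def expVal {A : Type*} [Fintype A] (u d : A → ℝ) : ℝ := ∑ a, d a * u a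

variable {n : ℕ} {A : Type*} [Fintype A]

/-- Valuations are nonnegative and nondecreasing in every signal coordinate. -/
def ValidVals (v : Fin n → A → (Fin n → ℝ) → ℝ) : Prop :=
  (∀ i a (s : Fin n → ℝ), InSig s → 0 ≤ v i a s) ∧
  (∀ i a (j : Fin n) (s : Fin n → ℝ), InSig s → ∀ t t' : ℝ, t ∈ Set.Icc (0 : ℝ) 1 →
    t' ∈ Set.Icc (0 : ℝ) 1 → t ≤ t' →
    v i a (Function.update s j t) ≤ v i a (Function.update s j t'))

/-- `f` maps every signal profile to a probability distribution over the alternatives. -/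
def IsDistr (f : (Fin n → ℝ) → A → ℝ) : Prop :=
  ∀ s : Fin n → ℝ, InSig s → (∀ a, 0 ≤ f s a) ∧ ∑ a, f s a = 1

/-- `v i` is decomposable: `v i a s = v̂ i s * h a s₋ᵢ + g a s₋ᵢ` with `v̂, h ≥ 0`, where
`h` and `g` depend only on the signals of the agents other than `i`. -/
def Decomposable (v : Fin n → A → (Fin n → ℝ) → ℝ) : Prop :=
  ∀ i, ∃ (vh : (Fin n → ℝ) → ℝ) (h g : A → (Fin n → ℝ) → ℝ),
    (∀ s : Fin n → ℝ, InSig s → 0 ≤ vh s) ∧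
    (∀ a (s : Fin n → ℝ), InSig s → 0 ≤ h a s) ∧
    (∀ a (s : Fin n → ℝ), InSig s → ∀ t ∈ Set.Icc (0 : ℝ) 1,
      h a (Function.update s i t) = h a s) ∧
    (∀ a (s : Fin n → ℝ), InSig s → ∀ t ∈ Set.Icc (0 : ℝ) 1,
      g a (Function.update s i t) = g a s) ∧
    (∀ a (s : Fin n → ℝ), InSig s → v i a s = vh s * h a s + g a s)

/-- `dv i a s` is the derivative of `v i a` with respect to agent `i`'s own signal at `s`. -/
def IsOwnDeriv (v dv : Fin n → A → (Fin n → ℝ) → ℝ) : Prop :=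
  ∀ i a (s : Fin n → ℝ), InSig s →
    HasDerivWithinAt (fun t => v i a (Function.update s i t)) (dv i a s)
      (Set.Icc (0 : ℝ) 1) (s i)

/-- The mechanism `(f, p)` is ex-post IC-IR. -/
def ExPostICIR (v : Fin n → A → (Fin n → ℝ) → ℝ) (f : (Fin n → ℝ) → A → ℝ)
    (p : Fin n → (Fin n → ℝ) → ℝ) : Prop :=
  ∀ i (s : Fin n → ℝ), InSig s →
    (∀ b ∈ Set.Icc (0 : ℝ) 1,
      expVal (fun a => v i a s) (f s) - p i s ≥
        expVal (fun a => v i a s) (f (Function.update s i b)) -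
          p i (Function.update s i b)) ∧
    expVal (fun a => v i a s) (f s) - p i s ≥ 0

/-- The profile `v` satisfies `f`-single-crossing: for all `i`, `s₋ᵢ` and signals
`sᵢ < z`, `⟨∂vᵢ/∂sᵢ(sᵢ, s₋ᵢ), f(z, s₋ᵢ)⟩ ≥ ⟨∂vᵢ/∂sᵢ(sᵢ, s₋ᵢ), f(sᵢ, s₋ᵢ)⟩`. -/
def FSC (dv : Fin n → A → (Fin n → ℝ) → ℝ) (f : (Fin n → ℝ) → A → ℝ) : Prop :=
  ∀ i (s : Fin n → ℝ), InSig s → ∀ z ∈ Set.Icc (0 : ℝ) 1, s i < z →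
    expVal (fun a => dv i a s) (f (Function.update s i z)) ≥
      expVal (fun a => dv i a s) (f s)

/-! Fix `i`, `s` and `z > sᵢ`, and let `ψ(t) = ⟨vᵢ(t, s₋ᵢ), f(z, s₋ᵢ) - f(s)⟩`. Adding the two IC
constraints between the types `sᵢ` and `z` gives `ψ(sᵢ) ≤ ψ(z)`. By decomposability
`ψ = v̂ᵢ · D + C` along agent `i`'s signal, with `v̂ᵢ` monotone whenever `D ≠ 0`; together with
`ψ(sᵢ) ≤ ψ(z)` this makes `ψ` monotone on `[sᵢ, z]`. Hence its derivative at `sᵢ`, which is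
`⟨∂vᵢ/∂sᵢ(s), f(z, s₋ᵢ) - f(s)⟩`, is nonnegative. -/

open Set Function

lemma InSig.update {s : Fin n → ℝ} (hs : InSig s) (i : Fin n) {t : ℝ} (ht : t ∈ Icc (0 : ℝ) 1) :
    InSig (update s i t) := by
  intro j
  rcases eq_or_ne j i with rfl | hji
  · simpa using ht
  · simpa [hji] using hs j

lemma expVal_sub_right (u d d' : A → ℝ) : expVal u (d - d') = expVal u d - expVal u d' := by
  simp only [expVal, Pi.sub_apply, sub_mul, Finset.sum_sub_distrib]

lemma hasDerivWithinAt_expVal {u : ℝ → A → ℝ} {u' : A → ℝ} {S : Set ℝ} {x : ℝ}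
    (hu : ∀ a, HasDerivWithinAt (fun t => u t a) (u' a) S x) (d : A → ℝ) :
    HasDerivWithinAt (fun t => expVal (u t) d) (expVal u' d) S x := by
  simpa only [expVal] using
    HasDerivWithinAt.fun_sum fun a _ => (hu a).const_mul (d a)

/-- Two-cycle monotonicity: adding the IC constraints of types `s` and `update s i z` against
each other cancels the payments. -/
lemma ExPostICIR.expVal_sub_le {v : Fin n → A → (Fin n → ℝ) → ℝ} {f : (Fin n → ℝ) → A → ℝ}
    {p : Fin n → (Fin n → ℝ) → ℝ} (hp : ExPostICIR v f p) (i : Fin n) {s : Fin n → ℝ}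
    (hs : InSig s) {z : ℝ} (hz : z ∈ Icc (0 : ℝ) 1) :
    expVal (fun a => v i a s) (f (update s i z) - f s) ≤
      expVal (fun a => v i a (update s i z)) (f (update s i z) - f s) := by
  have hIC := (hp i s hs).1 z hz
  have hIC' := (hp i _ (hs.update i hz)).1 (s i) (hs i)
  rw [update_idem, update_eq_self] at hIC'
  rw [expVal_sub_right, expVal_sub_right]
  linarith

lemma Decomposable.exists_expVal_update_eq_mul_add {v : Fin n → A → (Fin n → ℝ) → ℝ}
    (hdec : Decomposable v) (hv : ValidVals v) (i : Fin n) {s : Fin n → ℝ} (hs : InSig s)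
    (d : A → ℝ) :
    ∃ (φ : ℝ → ℝ) (D C : ℝ),
      (∀ t ∈ Icc (0 : ℝ) 1, expVal (fun a => v i a (update s i t)) d = φ t * D + C) ∧
      (D ≠ 0 → MonotoneOn φ (Icc 0 1)) := by
  obtain ⟨vh, h, g, -, hh0, hh, hg, hvdec⟩ := hdec i
  have hline : ∀ a, ∀ t ∈ Icc (0 : ℝ) 1,
      v i a (update s i t) = vh (update s i t) * h a s + g a s := fun a t ht => by
    rw [hvdec a _ (hs.update i ht), hh a s hs t ht, hg a s hs t ht]
  refine ⟨fun t => vh (update s i t), ∑ a, d a * h a s, ∑ a, d a * g a s,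
    fun t ht => ?_, fun hD => ?_⟩
  · simp only [expVal, hline _ t ht, Finset.mul_sum, ← Finset.sum_add_distrib]
    exact Finset.sum_congr rfl fun a _ => by ring
  · obtain ⟨a, -, hda⟩ := Finset.exists_ne_zero_of_sum_ne_zero hD
    have hpos : 0 < h a s := (hh0 a s hs).lt_of_ne' (right_ne_zero_of_mul hda)
    intro t ht t' ht' htt'
    have hmono := hv.2 i a i s hs t t' ht ht' htt'
    rw [hline a t ht, hline a t' ht'] at hmono
    exact le_of_mul_le_mul_right (by linarith) hpos

lemma monotoneOn_Icc_of_eq_mul_add {ψ φ : ℝ → ℝ} {x z D C : ℝ} (hxz : x ≤ z)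
    (hψ : ∀ t ∈ Icc x z, ψ t = φ t * D + C) (hφ : D ≠ 0 → MonotoneOn φ (Icc x z))
    (hends : ψ x ≤ ψ z) : MonotoneOn ψ (Icc x z) := by
  have hx : x ∈ Icc x z := ⟨le_rfl, hxz⟩
  have hz : z ∈ Icc x z := ⟨hxz, le_rfl⟩
  intro t ht t' ht' htt'
  rw [hψ x hx, hψ z hz] at hends
  rw [hψ t ht, hψ t' ht']
  rcases eq_or_ne D 0 with hD | hD
  · simp [hD]
  have hφ := hφ hD
  have h₁ := hφ hx ht ht.1
  have h₂ := hφ ht ht' htt'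
  have h₃ := hφ ht' hz ht'.2
  rcases hD.lt_or_gt with hneg | hpos
  · -- `D < 0` forces `φ z ≤ φ x`, so `φ` is constant on `[x, z]`
    have : φ z ≤ φ x := by nlinarith
    nlinarith
  · nlinarith

lemma HasDerivWithinAt.nonneg_of_monotoneOn_Icc {ψ : ℝ → ℝ} {L x z : ℝ} {S : Set ℝ}
    (hψ : HasDerivWithinAt ψ L S x) (hxz : x < z) (hS : Icc x z ⊆ S)
    (hmono : MonotoneOn ψ (Icc x z)) : 0 ≤ L :=
  ((hψ.mono hS).nonneg_of_monotoneOn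
    ((uniqueDiffOn_Icc hxz) x ⟨le_rfl, hxz.le⟩).accPt hmono)

theorem decomposable_implementable_implies_fsc_general
    (v dv : Fin n → A → (Fin n → ℝ) → ℝ)
    (f : (Fin n → ℝ) → A → ℝ)
    (hv : ValidVals v) (hdec : Decomposable v) (hdv : IsOwnDeriv v dv)
    (himpl : ∃ p : Fin n → (Fin n → ℝ) → ℝ, ExPostICIR v f p) :
    FSC dv f := by
  intro i s hs z hz hlt
  obtain ⟨p, hp⟩ := himpl
  set δ := f (update s i z) - f s
  set ψ := fun t => expVal (fun a => v i a (update s i t)) δ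
  have hsub : Icc (s i) z ⊆ Icc 0 1 := Icc_subset_Icc (hs i).1 hz.2
  have hderiv : HasDerivWithinAt ψ (expVal (fun a => dv i a s) δ) (Icc 0 1) (s i) :=
    hasDerivWithinAt_expVal (fun a => hdv i a s hs) δ
  have hends : ψ (s i) ≤ ψ z := by
    simpa only [ψ, update_eq_self] using hp.expVal_sub_le i hs hz
  obtain ⟨φ, D, C, hψ, hφ⟩ := hdec.exists_expVal_update_eq_mul_add hv i hs δ
  have hmono : MonotoneOn ψ (Icc (s i) z) :=
    monotoneOn_Icc_of_eq_mul_add hlt.le (fun t ht => hψ t (hsub ht))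
      (fun hD => (hφ hD).mono hsub) hends
  have hnonneg := hderiv.nonneg_of_monotoneOn_Icc hlt hsub hmono
  rw [expVal_sub_right] at hnonneg
  exact sub_nonneg.1 hnonneg

/-- With decomposable valuations, if `f` is implementable (some payments
make `(f, p)` ex-post IC-IR), then the profile `v` satisfies `f`-single-crossing. -/
theorem decomposable_implementable_implies_fsc
    (v dv : Fin n → A → (Fin n → ℝ) → ℝ)
    (f : (Fin n → ℝ) → A → ℝ)
    (hv : ValidVals v) (hdec : Decomposable v) (hdv : IsOwnDeriv v dv)
    (hf : IsDistr f)
    (himpl : ∃ p : Fin n → (Fin n → ℝ) → ℝ, ExPostICIR v f p) :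
    FSC dv f :=
  decomposable_implementable_implies_fsc_general v dv f hv hdec hdv himpl
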